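/- Let p be a prime, m = p, and j_1, ..., j_m ≥ 1 integers with v_p(j_1! ⋯ j_m!) = v_p(⌊(j_1+...+j_m)/p⌋) (finite). Then either j_i ≤ p-1 for all i, or there exists an index k such that j_k = 2p-1 and j_i = p-1 for all i ≠ k. -/

import Mathlib

/-!
Write `S = ∑ jᵢ`, `T = ⌊S/p⌋` and `v = v_p(T)`. Legendre's formula gives `v_p(n!) ≥ ⌊n/p⌋`, so
if some `jᵢ ≥ p` then `T ≥ 1` and
`p ^ v ≤ T ≤ ∑ ⌊jᵢ/p⌋ + (p - 1) ≤ v + (p - 1)`,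
which forces `v = 1`. Hence `∑ ⌊jᵢ/p⌋ ≤ 1` and `S ≥ pT ≥ p²`, while `S ≤ p ∑ ⌊jᵢ/p⌋ + p(p - 1) ≤ p²`.
Equality throughout makes every `jᵢ` congruent to `p - 1` modulo `p`, with exactly one quotient
equal to `1`.
-/

open Finset Nat

theorem Nat.add_le_pow_of_two_le {b n : ℕ} (hb : 2 ≤ b) (hn : 2 ≤ n) : n + b ≤ b ^ n := by
  induction n, hn using Nat.le_induction with
  | base => nlinarith
  | succ n hn ih => rw [pow_succ]; nlinarith

theorem Finset.sum_div_lt_sum_div_add_card {ι : Type*} {s : Finset ι} (hs : s.Nonempty)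
    (a : ι → ℕ) {p : ℕ} (hp : 0 < p) : (∑ i ∈ s, a i) / p < ∑ i ∈ s, a i / p + #s := by
  rw [Nat.div_lt_iff_lt_mul hp]
  calc ∑ i ∈ s, a i < ∑ i ∈ s, (a i / p + 1) * p :=
        sum_lt_sum_of_nonempty hs fun i _ => Nat.lt_mul_of_div_lt (Nat.lt_succ_self _) hp
  _ = _ := by simp [sum_add_distrib, sum_mul, add_mul]

theorem padicValNat_finset_prod {ι : Type*} {p : ℕ} [Fact p.Prime] {s : Finset ι} {f : ι → ℕ}
    (hf : ∀ i ∈ s, f i ≠ 0) : padicValNat p (∏ i ∈ s, f i) = ∑ i ∈ s, padicValNat p (f i) := by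
  classical
  induction s using Finset.induction_on with
  | empty => simp
  | insert a s ha ih =>
    rw [prod_insert ha, sum_insert ha, padicValNat.mul (hf a (mem_insert_self a s))
      (prod_ne_zero_iff.mpr fun i hi => hf i (mem_insert_of_mem hi)),
      ih fun i hi => hf i (mem_insert_of_mem hi)]

theorem div_le_padicValNat_factorial {p : ℕ} [Fact p.Prime] (n : ℕ) :
    n / p ≤ padicValNat p n ! := by
  rw [← padicValNat_mul_div_factorial, padicValNat_factorial_mul]
  exact Nat.le_add_left _ _

theorem exists_eq_two_mul_sub_one_of_sum_div_le_one {ι : Type*} [Fintype ι] {p : ℕ} (hp : 0 < p)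
    (a : ι → ℕ) (hq : ∑ i, a i / p ≤ 1) (ha : p + Fintype.card ι * (p - 1) ≤ ∑ i, a i) :
    ∃ k, a k = 2 * p - 1 ∧ ∀ i ≠ k, a i = p - 1 := by
  have hle : ∀ i ∈ univ, a i ≤ p * (a i / p) + (p - 1) := fun i _ => by
    have := Nat.div_add_mod (a i) p
    have := Nat.mod_lt (a i) hp
    omega
  have hsum : ∑ i, (p * (a i / p) + (p - 1)) = p * ∑ i, a i / p + Fintype.card ι * (p - 1) := by
    simp [sum_add_distrib, mul_sum]
  have hsum_le := sum_le_sum hle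
  have hq1 : ∑ i, a i / p = 1 :=
    le_antisymm hq (Nat.le_of_mul_le_mul_left (a := 1) (by omega) hp)
  have ha_eq : ∀ i, a i = p * (a i / p) + (p - 1) := fun i =>
    (sum_eq_sum_iff_of_le hle).mp (by rw [hq1, mul_one] at hsum; omega) i (mem_univ i)
  obtain ⟨k, -, hk⟩ := exists_ne_zero_of_sum_ne_zero (hq1.trans_ne one_ne_zero)
  have hk1 : a k / p = 1 := le_antisymm
    ((single_le_sum (f := fun i => a i / p) (fun i _ => Nat.zero_le _) (mem_univ k)).trans hq1.le)
    (Nat.one_le_iff_ne_zero.mpr hk)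
  refine ⟨k, by rw [ha_eq k, hk1]; omega, fun i hik => ?_⟩
  have hi0 : a i / p + 1 ≤ 1 := by
    simpa [hq1, hk1] using
      add_le_sum (f := fun i => a i / p) (fun i _ => Nat.zero_le _) (mem_univ i) (mem_univ k) hik
  rw [ha_eq i, Nat.eq_zero_of_le_zero (Nat.le_of_add_le_add_right hi0)]
  simp

theorem stmt_6_general (p : ℕ) (hp : p.Prime)
    (j : Fin p → ℕ)
    (heq : padicValNat p (∏ i, Nat.factorial (j i)) = padicValNat p ((∑ i, j i) / p)) :
    (∀ i, j i ≤ p - 1) ∨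
      ∃ k : Fin p, j k = 2 * p - 1 ∧ ∀ i ≠ k, j i = p - 1 := by
  have := Fact.mk hp
  refine or_iff_not_imp_left.mpr fun hsmall => ?_
  obtain ⟨k, hk⟩ : ∃ k, p ≤ j k := (not_forall.mp hsmall).imp fun k => by omega
  have hsum : p ≤ ∑ i, j i := hk.trans (single_le_sum (fun i _ => Nat.zero_le _) (mem_univ k))
  set v := padicValNat p ((∑ i, j i) / p)
  have hquot_le : ∑ i, j i / p ≤ v := by
    rw [← heq, padicValNat_finset_prod fun i _ => factorial_ne_zero _]
    exact sum_le_sum fun i _ => div_le_padicValNat_factorial _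
  have hquot_pos : 1 ≤ ∑ i, j i / p :=
    ((Nat.one_le_div_iff hp.pos).mpr hk).trans
      (single_le_sum (f := fun i => j i / p) (fun i _ => Nat.zero_le _) (mem_univ k))
  have hpow : p ^ v ≤ (∑ i, j i) / p := Nat.le_of_dvd (Nat.div_pos hsum hp.pos) pow_padicValNat_dvd
  have hlt : (∑ i, j i) / p < ∑ i, j i / p + p := by
    simpa using sum_div_lt_sum_div_add_card univ_nonempty j hp.pos
  have hv : v = 1 := by
    by_contra hv
    have := Nat.add_le_pow_of_two_le hp.two_le (n := v) (by omega)
    omega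
  refine exists_eq_two_mul_sub_one_of_sum_div_le_one hp.pos j (hv ▸ hquot_le) ?_
  rw [hv, pow_one, Nat.le_div_iff_mul_le hp.pos] at hpow
  rw [Fintype.card_fin, Nat.mul_sub_one]
  have := Nat.le_mul_self p
  omega

theorem stmt_6 (p : ℕ) (hp : p.Prime)
    (j : Fin p → ℕ) (hj : ∀ i, 1 ≤ j i)
    (heq : padicValNat p (∏ i, Nat.factorial (j i)) = padicValNat p ((∑ i, j i) / p)) :
    (∀ i, j i ≤ p - 1) ∨
      ∃ k : Fin p, j k = 2 * p - 1 ∧ ∀ i ≠ k, j i = p - 1 :=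
  stmt_6_general p hp j heq
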